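/- Let n ≥ 2 and T > 0. Let B : [0,T] → ℝ^{n×n} be continuous with B(t) null negative-definite for every t ∈ [0,T]. Let L : [0,T] → ℝ^{n×n} be a smooth (at least C³) family of Minkowski-symmetric matrices satisfying the Riccati equation t L′(t) + L(t)² − L(t) + t² B(t) = 0 for all t ∈ (0,T], with initial condition L(0) = id (the identity matrix). Then −L(t) is null negative-definite for every t ∈ (0,T]; equivalently, ⟨L(t)v, v⟩ > 0 for every t ∈ (0,T] and every nonzero null vector v ∈ ℝⁿ. -/

import Mathlib

open Matrix Set

noncomputable section

/-- The Minkowski inner product on `ℝⁿ`: `⟨v,w⟩ = -v₀w₀ + Σ_{j≥1} vⱼwⱼ`. -/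
def mink {n : ℕ} (v w : Fin n → ℝ) : ℝ :=
  ∑ j : Fin n, (if (j : ℕ) = 0 then -(v j * w j) else v j * w j)

/-- A vector is null if its Minkowski square vanishes. -/
def IsNull {n : ℕ} (v : Fin n → ℝ) : Prop := mink v v = 0

/-- A matrix is symmetric with respect to the Minkowski inner product. -/
def MinkSymm {n : ℕ} (L : Matrix (Fin n) (Fin n) ℝ) : Prop :=
  ∀ v w : Fin n → ℝ, mink (L.mulVec v) w = mink v (L.mulVec w)

/-- A matrix is null negative-definite: `⟨Lv,v⟩ < 0` for all nonzero null `v`. -/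
def NullNegDef {n : ℕ} (L : Matrix (Fin n) (Fin n) ℝ) : Prop :=
  ∀ v : Fin n → ℝ, v ≠ 0 → IsNull v → mink (L.mulVec v) v < 0

/-- A matrix is null negative semi-definite: `⟨Lv,v⟩ ≤ 0` for all null `v`. -/
def NullNegSemi {n : ℕ} (L : Matrix (Fin n) (Fin n) ℝ) : Prop :=
  ∀ v : Fin n → ℝ, IsNull v → mink (L.mulVec v) v ≤ 0

/-- Entrywise derivative (within a set) of a matrix-valued function of a real variable. -/
def matDerivWithin {n : ℕ} (L : ℝ → Matrix (Fin n) (Fin n) ℝ) (s : Set ℝ) (t : ℝ) :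
    Matrix (Fin n) (Fin n) ℝ :=
  Matrix.of fun i j => derivWithin (fun u => L u i j) s t

/-!
Near `t = 0` the Riccati equation forces `L(t) = 1 - (t²/3) B(0) + o(t²)`, so `⟨L(t)v,v⟩ > 0`
for small `t > 0`, uniformly on the compact set of null vectors of norm one. If positivity failed
later, there would be a first time `t₀` with `⟨L(t₀)v₀,v₀⟩ = 0` for some null `v₀ ≠ 0`. Then `v₀`
minimizes `⟨L(t₀)·,·⟩` on the light cone, which forces `L(t₀)v₀` to be null, that is
`⟨L(t₀)²v₀,v₀⟩ = 0`. Contracting the Riccati equation with `v₀` now gives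
`⟨L'(t₀)v₀,v₀⟩ = -t₀⟨B(t₀)v₀,v₀⟩ > 0`, although `⟨L(t)v₀,v₀⟩ > 0 = ⟨L(t₀)v₀,v₀⟩` for `t < t₀`.
-/

open Filter Topology

lemma eq_zero_of_forall_nonneg_mul_add_sq_mul {a : ℝ} {g : ℝ → ℝ} (hg : ContinuousAt g 0)
    (h : ∀ s, 0 ≤ a * s + s ^ 2 * g s) : a = 0 := by
  have hlim : Tendsto (fun s => a + s * g s) (𝓝 0) (𝓝 a) := by
    simpa using tendsto_const_nhds.add (tendsto_id.mul hg)
  have hfactor : ∀ s, a * s + s ^ 2 * g s = s * (a + s * g s) := fun s => by ring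
  apply le_antisymm
  · refine le_of_tendsto (hlim.mono_left nhdsWithin_le_nhds : Tendsto _ (𝓝[<] (0 : ℝ)) _) ?_
    filter_upwards [self_mem_nhdsWithin] with s (hs : s < 0)
    have := hfactor s ▸ h s
    nlinarith
  · refine ge_of_tendsto (hlim.mono_left nhdsWithin_le_nhds : Tendsto _ (𝓝[>] (0 : ℝ)) _) ?_
    filter_upwards [self_mem_nhdsWithin] with s (hs : 0 < s)
    have := hfactor s ▸ h s
    nlinarith

lemma nonpos_of_hasDerivWithinAt_of_nonneg_left {f : ℝ → ℝ} {f' a b : ℝ} (hab : a < b)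
    (hf : HasDerivWithinAt f f' (Ioo a b) b) (hfb : f b = 0) (hpos : ∀ x ∈ Ioo a b, 0 ≤ f x) :
    f' ≤ 0 := by
  rw [hasDerivWithinAt_iff_tendsto_slope' (by simp), nhdsWithin_Ioo_eq_nhdsLT hab] at hf
  refine le_of_tendsto hf ?_
  filter_upwards [Ioo_mem_nhdsLT hab] with x hx
  rw [slope_def_field, hfb, sub_zero]
  exact div_nonpos_of_nonneg_of_nonpos (hpos x hx) (by linarith [hx.2])

section RightLimits

variable {T : ℝ}

lemma tendsto_div_nhdsGT_of_hasDerivWithinAt {f : ℝ → ℝ} {d : ℝ} (hT : 0 < T)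
    (hf : HasDerivWithinAt f d (Icc 0 T) 0) (hf0 : f 0 = 0) :
    Tendsto (fun t => f t / t) (𝓝[>] 0) (𝓝 d) := by
  have h := hasDerivWithinAt_iff_tendsto_slope' (by simp) |>.1
    (hf.mono_of_mem_nhdsWithin (Icc_mem_nhdsGT hT) : HasDerivWithinAt f d (Ioi 0) 0)
  refine h.congr fun t => ?_
  simp [slope_def_field, hf0]

lemma tendsto_div_sq_nhdsGT_of_hasDerivWithinAt {f f' : ℝ → ℝ} {d : ℝ} (hT : 0 < T)
    (hf : ∀ t ∈ Icc 0 T, HasDerivWithinAt f (f' t) (Icc 0 T) t) (hf0 : f 0 = 0)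
    (hf'0 : f' 0 = 0) (hf' : HasDerivWithinAt f' d (Icc 0 T) 0) :
    Tendsto (fun t => f t / t ^ 2) (𝓝[>] 0) (𝓝 (d / 2)) := by
  have hderiv : ∀ᶠ t in 𝓝[>] 0, HasDerivAt f (f' t) t := by
    filter_upwards [Ioo_mem_nhdsGT hT] with t ht
    exact (hf t (Ioo_subset_Icc_self ht)).hasDerivAt (Icc_mem_nhds ht.1 ht.2)
  have hflim : Tendsto f (𝓝[>] 0) (𝓝 0) := by
    simpa [ContinuousWithinAt, hf0] using
      (hf 0 ⟨le_rfl, hT.le⟩).continuousWithinAt.mono_of_mem_nhdsWithin (Icc_mem_nhdsGT hT)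
  have hsq : Tendsto (fun t : ℝ => t ^ 2) (𝓝[>] 0) (𝓝 0) := by
    simpa using ((continuous_pow 2).tendsto (0 : ℝ)).mono_left nhdsWithin_le_nhds
  refine HasDerivAt.lhopital_zero_nhdsGT hderiv
    (Eventually.of_forall fun t => by simpa using hasDerivAt_pow 2 t)
    (eventually_nhdsWithin_of_forall fun t (ht : 0 < t) => by positivity) hflim hsq ?_
  simpa [div_mul_eq_div_div_swap] using
    (tendsto_div_nhdsGT_of_hasDerivWithinAt hT hf' hf'0).div_const 2

end RightLimits

lemma exists_first_zero {X : Type*} [TopologicalSpace X] [T2Space X] {S : Set X}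
    (hS : IsCompact S) {Φ : ℝ → X → ℝ} {T : ℝ}
    (hΦ : ContinuousOn (Function.uncurry Φ) (Icc 0 T ×ˢ S))
    (hsmall : ∀ᶠ t in 𝓝[>] 0, ∀ x ∈ S, 0 < Φ t x) (hbad : ∃ t ∈ Ioc 0 T, ∃ x ∈ S, Φ t x ≤ 0) :
    ∃ t₀ ∈ Ioc 0 T, ∃ x₀ ∈ S, Φ t₀ x₀ = 0 ∧ (∀ x ∈ S, 0 ≤ Φ t₀ x) ∧
      ∀ t ∈ Ioo 0 t₀, ∀ x ∈ S, 0 < Φ t x := by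
  obtain ⟨δ, hδ, hδsmall⟩ := mem_nhdsGT_iff_exists_Ioo_subset.1 hsmall
  have hδT : Icc δ T ×ˢ S ⊆ Icc 0 T ×ˢ S := prod_mono (Icc_subset_Icc_left (le_of_lt hδ)) le_rfl
  set K := (Icc δ T ×ˢ S) ∩ Function.uncurry Φ ⁻¹' Iic 0
  have hK : IsCompact K := (isCompact_Icc.prod hS).of_isClosed_subset
    ((hΦ.mono hδT).preimage_isClosed_of_isClosed (isCompact_Icc.prod hS).isClosed isClosed_Iic)
    inter_subset_left
  have hlate : ∀ t ∈ Ioc 0 T, ∀ x ∈ S, Φ t x ≤ 0 → (t, x) ∈ K := by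
    intro t ht x hx hΦx
    refine ⟨⟨⟨not_lt.1 fun htδ => ?_, ht.2⟩, hx⟩, hΦx⟩
    exact (hδsmall ⟨ht.1, htδ⟩ x hx).not_ge hΦx
  obtain ⟨t₁, ht₁, x₁, hx₁, hΦ₁⟩ := hbad
  obtain ⟨⟨t₀, x₀⟩, ⟨⟨ht₀, hx₀⟩, hΦ₀⟩, hmin⟩ :=
    hK.exists_isMinOn ⟨_, hlate t₁ ht₁ x₁ hx₁ hΦ₁⟩ continuous_fst.continuousOn
  have ht₀pos : 0 < t₀ := lt_of_lt_of_le hδ ht₀.1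
  have hbefore : ∀ t ∈ Ioo 0 t₀, ∀ x ∈ S, 0 < Φ t x := by
    intro t ht x hx
    by_contra! hΦx
    exact ht.2.not_ge (hmin (hlate t ⟨ht.1, ht.2.le.trans ht₀.2⟩ x hx hΦx))
  have hat : ∀ x ∈ S, 0 ≤ Φ t₀ x := by
    intro x hx
    have hcont : ContinuousWithinAt (fun t => Φ t x) (Ioo 0 t₀) t₀ :=
      ((hΦ.comp (Continuous.prodMk_left x).continuousOn fun t ht => ⟨ht, hx⟩)
        t₀ ⟨ht₀pos.le, ht₀.2⟩).mono fun t ht => ⟨ht.1.le, ht.2.le.trans ht₀.2⟩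
    rw [ContinuousWithinAt, nhdsWithin_Ioo_eq_nhdsLT ht₀pos] at hcont
    exact ge_of_tendsto hcont <| by
      filter_upwards [Ioo_mem_nhdsLT ht₀pos] with t ht using (hbefore t ht x hx).le
  exact ⟨t₀, ⟨ht₀pos, ht₀.2⟩, x₀, hx₀, le_antisymm hΦ₀ (hat x₀ hx₀), hat, hbefore⟩

section Minkowski

variable {n : ℕ}

lemma mink_comm (v w : Fin n → ℝ) : mink v w = mink w v := by
  simp only [mink, mul_comm]

lemma mink_add_left (u v w : Fin n → ℝ) : mink (u + v) w = mink u w + mink v w := by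
  simp only [mink, ← Finset.sum_add_distrib]
  refine Finset.sum_congr rfl fun j _ => ?_
  split_ifs <;> simp only [Pi.add_apply] <;> ring

lemma mink_smul_left (c : ℝ) (v w : Fin n → ℝ) : mink (c • v) w = c * mink v w := by
  simp only [mink, Finset.mul_sum]
  refine Finset.sum_congr rfl fun j _ => ?_
  split_ifs <;> simp only [Pi.smul_apply, smul_eq_mul] <;> ring

lemma mink_sub_left (u v w : Fin n → ℝ) : mink (u - v) w = mink u w - mink v w := by
  simp only [mink, ← Finset.sum_sub_distrib]
  refine Finset.sum_congr rfl fun j _ => ?_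
  split_ifs <;> simp only [Pi.sub_apply] <;> ring

lemma mink_add_right (u v w : Fin n → ℝ) : mink u (v + w) = mink u v + mink u w := by
  rw [mink_comm, mink_add_left, mink_comm v, mink_comm w]

lemma mink_sub_right (u v w : Fin n → ℝ) : mink u (v - w) = mink u v - mink u w := by
  rw [mink_comm, mink_sub_left, mink_comm v, mink_comm w]

lemma mink_smul_right (c : ℝ) (v w : Fin n → ℝ) : mink v (c • w) = c * mink v w := by
  rw [mink_comm, mink_smul_left, mink_comm]

@[fun_prop]
lemma Continuous.mink {X : Type*} [TopologicalSpace X] {f g : X → Fin n → ℝ}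
    (hf : Continuous f) (hg : Continuous g) : Continuous fun x => mink (f x) (g x) := by
  unfold _root_.mink
  refine continuous_finsetSum _ fun j _ => ?_
  split_ifs <;> fun_prop

lemma isClosed_setOf_isNull : IsClosed {v : Fin n → ℝ | IsNull v} :=
  isClosed_eq (by fun_prop) continuous_const

lemma IsNull.smul {v : Fin n → ℝ} (hv : IsNull v) (c : ℝ) : IsNull (c • v) := by
  rw [IsNull, mink_smul_left, mink_smul_right, hv, mul_zero, mul_zero]

lemma mink_mulVec_smul (M : Matrix (Fin n) (Fin n) ℝ) (c : ℝ) (v : Fin n → ℝ) :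
    mink (M *ᵥ (c • v)) (c • v) = c ^ 2 * mink (M *ᵥ v) v := by
  rw [Matrix.mulVec_smul, mink_smul_left, mink_smul_right]
  ring

lemma MinkSymm.mink_mulVec_add {L : Matrix (Fin n) (Fin n) ℝ} (hL : MinkSymm L)
    (v w : Fin n → ℝ) :
    mink (L *ᵥ (v + w)) (v + w) = mink (L *ᵥ v) v + 2 * mink (L *ᵥ v) w + mink (L *ᵥ w) w := by
  rw [Matrix.mulVec_add, mink_add_left, mink_add_right, mink_add_right, hL w v, mink_comm w]
  ring

/-- The reflection `(v₀, v₁, …) ↦ (v₀, -v₁, …)` pairs `v` with `-(v ⬝ᵥ v)`. -/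
lemma exists_isNull_mink_eq_neg_one {v : Fin n → ℝ} (hv : IsNull v) (hv0 : v ≠ 0) :
    ∃ k, IsNull k ∧ mink v k = -1 := by
  set r : Fin n → ℝ := fun j => if (j : ℕ) = 0 then v j else -v j
  have hvr : mink v r = -(v ⬝ᵥ v) := by
    simp only [mink, r, dotProduct, ← Finset.sum_neg_distrib]
    refine Finset.sum_congr rfl fun j _ => ?_
    split_ifs <;> ring
  have hr : IsNull r := by
    unfold IsNull at hv ⊢
    rw [← hv]
    simp only [mink, r]
    refine Finset.sum_congr rfl fun j _ => ?_
    split_ifs <;> ring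
  have hvv : v ⬝ᵥ v ≠ 0 := fun h => hv0 (dotProduct_self_eq_zero.1 h)
  refine ⟨(v ⬝ᵥ v)⁻¹ • r, hr.smul _, ?_⟩
  rw [mink_smul_right, hvr, mul_neg, inv_mul_cancel₀ hvv]

/-- `s ↦ v + s w + (s² ⟨w,w⟩ / 2) k` is a null curve through `v` with velocity `w`. -/
lemma MinkSymm.mink_mulVec_eq_zero_of_nonneg {L : Matrix (Fin n) (Fin n) ℝ} (hL : MinkSymm L)
    (hQ : ∀ x, IsNull x → 0 ≤ mink (L *ᵥ x) x) {v k w : Fin n → ℝ} (hv : IsNull v)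
    (hLv : mink (L *ᵥ v) v = 0) (hk : IsNull k) (hvk : mink v k = -1) (hvw : mink v w = 0)
    (hkw : mink k w = 0) : mink (L *ᵥ v) w = 0 := by
  set c := mink w w / 2
  have hnull : ∀ s : ℝ, IsNull (v + s • (w + (c * s) • k)) := fun s => by
    unfold IsNull at hv hk ⊢
    simp only [mink_add_left, mink_add_right, mink_smul_left, mink_smul_right]
    rw [mink_comm w v, mink_comm k v, mink_comm w k, hv, hk, hvk, hvw, hkw]
    ring
  have hexpand : ∀ s : ℝ,
      mink (L *ᵥ (v + s • (w + (c * s) • k))) (v + s • (w + (c * s) • k)) =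
        2 * mink (L *ᵥ v) w * s +
          s ^ 2 * (2 * c * mink (L *ᵥ v) k + mink (L *ᵥ (w + (c * s) • k)) (w + (c * s) • k)) :=
    fun s => by
      rw [hL.mink_mulVec_add, hLv, mink_mulVec_smul, mink_smul_right, mink_add_right,
        mink_smul_right]
      ring
  have h := eq_zero_of_forall_nonneg_mul_add_sq_mul (a := 2 * mink (L *ᵥ v) w)
    (by fun_prop) fun s => hexpand s ▸ hQ _ (hnull s)
  linarith

/-- `L v` is orthogonal to `v^⊥`, hence a multiple of `v`. -/
lemma MinkSymm.isNull_mulVec_of_nonneg {L : Matrix (Fin n) (Fin n) ℝ} (hL : MinkSymm L)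
    (hQ : ∀ x, IsNull x → 0 ≤ mink (L *ᵥ x) x) {v : Fin n → ℝ} (hv : IsNull v)
    (hLv : mink (L *ᵥ v) v = 0) : IsNull (L *ᵥ v) := by
  rcases eq_or_ne v 0 with rfl | hv0
  · simp [IsNull, mink]
  obtain ⟨k, hk, hvk⟩ := exists_isNull_mink_eq_neg_one hv hv0
  set p := L *ᵥ v
  have hp : mink p (p - (-mink p k) • v) = 0 := by
    refine hL.mink_mulVec_eq_zero_of_nonneg hQ hv hLv hk hvk ?_ ?_
    · rw [mink_sub_right, mink_smul_right, hv, mink_comm, hLv]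
      ring
    · rw [mink_sub_right, mink_smul_right, mink_comm k v, hvk, mink_comm]
      ring
  rw [mink_sub_right, mink_smul_right, hLv] at hp
  unfold IsNull
  linarith

lemma mink_mulVec_pos_of_riccati {L L' B : Matrix (Fin n) (Fin n) ℝ} {t : ℝ} (ht : 0 < t)
    (hRic : L' = t⁻¹ • (L - L * L) - t • B) (hL : MinkSymm L) (hB : NullNegDef B)
    (hQ : ∀ x, IsNull x → 0 ≤ mink (L *ᵥ x) x) {v : Fin n → ℝ} (hv0 : v ≠ 0) (hv : IsNull v)
    (hLv : mink (L *ᵥ v) v = 0) : 0 < mink (L' *ᵥ v) v := by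
  have hLLv : mink ((L * L) *ᵥ v) v = 0 := by
    rw [← mulVec_mulVec, hL]
    exact hL.isNull_mulVec_of_nonneg hQ hv hLv
  rw [hRic, sub_mulVec, smul_mulVec, smul_mulVec, sub_mulVec, mink_sub_left, mink_smul_left,
    mink_smul_left, mink_sub_left, hLv, hLLv]
  nlinarith [hB v hv0 hv]

end Minkowski

section NullSphere

variable {n : ℕ}

/-- Every nonzero null vector is a positive multiple of a point of this compact set. -/
def nullSphere (n : ℕ) : Set (Fin n → ℝ) := {v | IsNull v} ∩ Metric.sphere 0 1

lemma isCompact_nullSphere : IsCompact (nullSphere n) :=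
  (isCompact_sphere 0 1).inter_left isClosed_setOf_isNull

lemma ne_zero_of_mem_nullSphere {x : Fin n → ℝ} (hx : x ∈ nullSphere n) : x ≠ 0 :=
  norm_ne_zero_iff.1 (by rw [mem_sphere_zero_iff_norm.1 hx.2]; exact one_ne_zero)

lemma inv_norm_smul_mem_nullSphere {v : Fin n → ℝ} (hv : IsNull v) (hv0 : v ≠ 0) :
    ‖v‖⁻¹ • v ∈ nullSphere n :=
  ⟨hv.smul _, by simp [norm_smul, hv0]⟩

lemma mink_mulVec_pos_of_nullSphere {M : Matrix (Fin n) (Fin n) ℝ}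
    (hM : ∀ x ∈ nullSphere n, 0 < mink (M *ᵥ x) x) {v : Fin n → ℝ} (hv0 : v ≠ 0)
    (hv : IsNull v) : 0 < mink (M *ᵥ v) v := by
  have h := hM _ (inv_norm_smul_mem_nullSphere hv hv0)
  rw [mink_mulVec_smul] at h
  exact pos_of_mul_pos_right h (by positivity)

lemma mink_mulVec_nonneg_of_nullSphere {M : Matrix (Fin n) (Fin n) ℝ}
    (hM : ∀ x ∈ nullSphere n, 0 ≤ mink (M *ᵥ x) x) {v : Fin n → ℝ} (hv : IsNull v) :
    0 ≤ mink (M *ᵥ v) v := by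
  rcases eq_or_ne v 0 with rfl | hv0
  · simp [mink]
  have h := hM _ (inv_norm_smul_mem_nullSphere hv hv0)
  rw [mink_mulVec_smul] at h
  exact nonneg_of_mul_nonneg_right h (by positivity)

lemma continuous_mink_mulVec_self :
    Continuous fun z : Matrix (Fin n) (Fin n) ℝ × (Fin n → ℝ) => mink (z.1 *ᵥ z.2) z.2 := by
  fun_prop

lemma continuousOn_mink_mulVec_self {L : ℝ → Matrix (Fin n) (Fin n) ℝ} {s : Set ℝ}
    {S : Set (Fin n → ℝ)} (hL : ∀ i j, ContinuousOn (fun t => L t i j) s) :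
    ContinuousOn (fun p : ℝ × (Fin n → ℝ) => mink (L p.1 *ᵥ p.2) p.2) (s ×ˢ S) := by
  have hLs : ContinuousOn L s := continuousOn_pi.2 fun i => continuousOn_pi.2 (hL i)
  have hpair : ContinuousOn (fun p : ℝ × (Fin n → ℝ) => (L p.1, p.2)) (s ×ˢ S) :=
    (hLs.comp continuousOn_fst fun _ hp => hp.1).prodMk continuousOn_snd
  exact (continuous_mink_mulVec_self.comp_continuousOn hpair :)

lemma Filter.Tendsto.eventually_forall_nullSphere_pos {α : Type*} {l : Filter α}
    {K : α → Matrix (Fin n) (Fin n) ℝ} {K₀ : Matrix (Fin n) (Fin n) ℝ} (hK : Tendsto K l (𝓝 K₀))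
    (hK₀ : ∀ x ∈ nullSphere n, 0 < mink (K₀ *ᵥ x) x) :
    ∀ᶠ a in l, ∀ x ∈ nullSphere n, 0 < mink (K a *ᵥ x) x :=
  hK.eventually <| isCompact_nullSphere.eventually_forall_of_forall_eventually
    (P := fun K x => 0 < mink (K *ᵥ x) x)
    fun x hx => (continuous_mink_mulVec_self.tendsto (K₀, x)).eventually (lt_mem_nhds (hK₀ x hx))

end NullSphere

section MatrixDeriv

variable {l m p : Type*}

/-- Matrices carry no global norm in Mathlib, so derivatives of matrix-valued maps are taken
entrywise, as in `matDerivWithin`. -/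
def HasMatDerivWithinAt (F : ℝ → Matrix m p ℝ) (F' : Matrix m p ℝ) (s : Set ℝ) (t : ℝ) : Prop :=
  ∀ i j, HasDerivWithinAt (fun r => F r i j) (F' i j) s t

variable {F G : ℝ → Matrix m p ℝ} {F' G' : Matrix m p ℝ} {s : Set ℝ} {t : ℝ}

lemma HasMatDerivWithinAt.sub (hF : HasMatDerivWithinAt F F' s t)
    (hG : HasMatDerivWithinAt G G' s t) : HasMatDerivWithinAt (fun r => F r - G r) (F' - G') s t :=
  fun i j => (hF i j).sub (hG i j)

lemma HasMatDerivWithinAt.add (hF : HasMatDerivWithinAt F F' s t)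
    (hG : HasMatDerivWithinAt G G' s t) : HasMatDerivWithinAt (fun r => F r + G r) (F' + G') s t :=
  fun i j => (hF i j).add (hG i j)

lemma HasMatDerivWithinAt.sub_const (hF : HasMatDerivWithinAt F F' s t) (C : Matrix m p ℝ) :
    HasMatDerivWithinAt (fun r => F r - C) F' s t :=
  fun i j => (hF i j).sub_const (C i j)

lemma HasMatDerivWithinAt.mul [Fintype m] {F : ℝ → Matrix l m ℝ} {F' : Matrix l m ℝ}
    {G : ℝ → Matrix m p ℝ} {G' : Matrix m p ℝ} (hF : HasMatDerivWithinAt F F' s t)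
    (hG : HasMatDerivWithinAt G G' s t) :
    HasMatDerivWithinAt (fun r => F r * G r) (F' * G t + F t * G') s t := fun i j => by
  simp only [Matrix.mul_apply, Matrix.add_apply, ← Finset.sum_add_distrib]
  exact HasDerivWithinAt.fun_sum fun k _ => (hF i k).mul (hG k j)

lemma HasMatDerivWithinAt.continuousWithinAt (hF : HasMatDerivWithinAt F F' s t) :
    ContinuousWithinAt F s t :=
  continuousWithinAt_pi.2 fun i => continuousWithinAt_pi.2 fun j => (hF i j).continuousWithinAt

lemma HasMatDerivWithinAt.mink_mulVec {n : ℕ} {F : ℝ → Matrix (Fin n) (Fin n) ℝ}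
    {F' : Matrix (Fin n) (Fin n) ℝ} (hF : HasMatDerivWithinAt F F' s t) (v w : Fin n → ℝ) :
    HasDerivWithinAt (fun r => mink (F r *ᵥ v) w) (mink (F' *ᵥ v) w) s t := by
  simp only [mink, Matrix.mulVec, dotProduct]
  refine HasDerivWithinAt.fun_sum fun i _ => ?_
  have hi := HasDerivWithinAt.fun_sum fun j (_ : j ∈ Finset.univ) => (hF i j).mul_const (v j)
  split_ifs
  · exact (hi.mul_const (w i)).neg
  · exact hi.mul_const (w i)

lemma hasMatDerivWithinAt_matDerivWithin {n : ℕ} {L : ℝ → Matrix (Fin n) (Fin n) ℝ}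
    (hL : ∀ i j, DifferentiableOn ℝ (fun r => L r i j) s) (ht : t ∈ s) :
    HasMatDerivWithinAt L (matDerivWithin L s t) s t :=
  fun i j => (hL i j t ht).hasDerivWithinAt

variable {T : ℝ}

lemma HasMatDerivWithinAt.tendsto_inv_smul (hT : 0 < T)
    (hF : HasMatDerivWithinAt F F' (Icc 0 T) 0) (hF0 : F 0 = 0) :
    Tendsto (fun t => t⁻¹ • F t) (𝓝[>] 0) (𝓝 F') :=
  tendsto_pi_nhds.2 fun i => tendsto_pi_nhds.2 fun j => by
    simpa [div_eq_inv_mul] using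
      tendsto_div_nhdsGT_of_hasDerivWithinAt hT (hF i j) (by simp [hF0])

lemma tendsto_inv_sq_smul_of_hasMatDerivWithinAt {F' : ℝ → Matrix m p ℝ} {F'' : Matrix m p ℝ}
    (hT : 0 < T) (hF : ∀ t ∈ Icc 0 T, HasMatDerivWithinAt F (F' t) (Icc 0 T) t)
    (hF0 : F 0 = 0) (hF'0 : F' 0 = 0) (hF' : HasMatDerivWithinAt F' F'' (Icc 0 T) 0) :
    Tendsto (fun t => (t ^ 2)⁻¹ • F t) (𝓝[>] 0) (𝓝 ((2 : ℝ)⁻¹ • F'')) :=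
  tendsto_pi_nhds.2 fun i => tendsto_pi_nhds.2 fun j => by
    simpa [div_eq_inv_mul] using tendsto_div_sq_nhdsGT_of_hasDerivWithinAt hT
      (fun t ht => hF t ht i j) (by simp [hF0]) (by simp [hF'0]) (hF' i j)

end MatrixDeriv

lemma riccati_eq_inv_smul {m : Type*} [Fintype m] {L L' B : Matrix m m ℝ} {t : ℝ} (ht : t ≠ 0)
    (hRic : t • L' + L * L - L + t ^ 2 • B = 0) : L' = t⁻¹ • (L - L * L) - t • B := by
  have h : t • L' = (L - L * L) - t ^ 2 • B := by
    linear_combination (norm := module) hRic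
  rw [← inv_smul_smul₀ ht L', h, smul_sub, smul_smul]
  congr 2
  field_simp

section Riccati

variable {n : ℕ} {T : ℝ} {B L : ℝ → Matrix (Fin n) (Fin n) ℝ}
variable {L' : ℝ → Matrix (Fin n) (Fin n) ℝ} {L'' : Matrix (Fin n) (Fin n) ℝ}

lemma riccati_deriv_zero_eq_zero (hT : 0 < T) (hB : ContinuousWithinAt B (Icc 0 T) 0)
    (hL0 : L 0 = 1) (hL : HasMatDerivWithinAt L (L' 0) (Icc 0 T) 0)
    (hL' : ContinuousWithinAt L' (Icc 0 T) 0)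
    (hRic : ∀ t ∈ Ioc (0 : ℝ) T, L' t = t⁻¹ • (L t - L t * L t) - t • B t) :
    L' 0 = 0 := by
  have hG : HasMatDerivWithinAt (fun t => L t - L t * L t) (-L' 0) (Icc 0 T) 0 := by
    simpa [hL0] using hL.sub (hL.mul hL)
  have hlim : Tendsto (fun t => t⁻¹ • (L t - L t * L t) - t • B t) (𝓝[>] (0 : ℝ))
      (𝓝 (-L' 0 - (0 : ℝ) • B 0)) :=
    (hG.tendsto_inv_smul hT (by simp [hL0])).sub
      ((tendsto_id.mono_left nhdsWithin_le_nhds).smul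
        (hB.mono_of_mem_nhdsWithin (Icc_mem_nhdsGT hT)))
  have h := tendsto_nhds_unique ((hL'.mono_of_mem_nhdsWithin (Icc_mem_nhdsGT hT)).congr' <| by
    filter_upwards [Ioc_mem_nhdsGT hT] with t ht using hRic t ht) hlim
  linear_combination (norm := module) (2⁻¹ : ℝ) • h

lemma riccati_second_deriv_zero_eq (hT : 0 < T) (hB : ContinuousWithinAt B (Icc 0 T) 0)
    (hL0 : L 0 = 1) (hL : ∀ t ∈ Icc 0 T, HasMatDerivWithinAt L (L' t) (Icc 0 T) t)
    (hL' : HasMatDerivWithinAt L' L'' (Icc 0 T) 0)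
    (hRic : ∀ t ∈ Ioc (0 : ℝ) T, L' t = t⁻¹ • (L t - L t * L t) - t • B t) :
    L'' = (-(2 / 3) : ℝ) • B 0 := by
  have hL'0 := riccati_deriv_zero_eq_zero hT hB hL0 (hL 0 ⟨le_rfl, hT.le⟩)
    hL'.continuousWithinAt hRic
  have hG : ∀ t ∈ Icc 0 T, HasMatDerivWithinAt (fun t => L t - L t * L t)
      (L' t - (L' t * L t + L t * L' t)) (Icc 0 T) t :=
    fun t ht => (hL t ht).sub ((hL t ht).mul (hL t ht))
  have hG' : HasMatDerivWithinAt (fun t => L' t - (L' t * L t + L t * L' t)) (-L'')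
      (Icc 0 T) 0 := by
    have hL₀ := hL 0 ⟨le_rfl, hT.le⟩
    simpa [hL0, hL'0] using hL'.sub ((hL'.mul hL₀).add (hL₀.mul hL'))
  have hlim : Tendsto (fun t => (t ^ 2)⁻¹ • (L t - L t * L t) - B t) (𝓝[>] (0 : ℝ))
      (𝓝 ((2 : ℝ)⁻¹ • -L'' - B 0)) :=
    (tendsto_inv_sq_smul_of_hasMatDerivWithinAt hT hG (by simp [hL0]) (by simp [hL0, hL'0])
      hG').sub (hB.mono_of_mem_nhdsWithin (Icc_mem_nhdsGT hT))
  have h := tendsto_nhds_unique ((hL'.tendsto_inv_smul hT hL'0).congr' <| by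
    filter_upwards [Ioc_mem_nhdsGT hT] with t ht
    rw [hRic t ht, smul_sub, smul_smul, smul_smul, inv_mul_cancel₀ ht.1.ne', one_smul, pow_two,
      mul_inv]) hlim
  linear_combination (norm := module) (2 / 3 : ℝ) • h

lemma riccati_tendsto_inv_sq_smul (hT : 0 < T) (hB : ContinuousWithinAt B (Icc 0 T) 0)
    (hL0 : L 0 = 1) (hL : ∀ t ∈ Icc 0 T, HasMatDerivWithinAt L (L' t) (Icc 0 T) t)
    (hL' : HasMatDerivWithinAt L' L'' (Icc 0 T) 0)
    (hRic : ∀ t ∈ Ioc (0 : ℝ) T, L' t = t⁻¹ • (L t - L t * L t) - t • B t) :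
    Tendsto (fun t => (t ^ 2)⁻¹ • (L t - 1)) (𝓝[>] 0) (𝓝 ((-(1 / 3) : ℝ) • B 0)) := by
  have hL'0 := riccati_deriv_zero_eq_zero hT hB hL0 (hL 0 ⟨le_rfl, hT.le⟩)
    hL'.continuousWithinAt hRic
  have h := tendsto_inv_sq_smul_of_hasMatDerivWithinAt hT (fun t ht => (hL t ht).sub_const 1)
    (by simp [hL0]) hL'0 hL'
  rwa [riccati_second_deriv_zero_eq hT hB hL0 hL hL' hRic, smul_smul,
    show (2 : ℝ)⁻¹ * -(2 / 3) = -(1 / 3) by norm_num] at h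

lemma riccati_eventually_pos_on_nullSphere (hT : 0 < T) (hB : ContinuousWithinAt B (Icc 0 T) 0)
    (hB0 : NullNegDef (B 0)) (hL0 : L 0 = 1)
    (hL : ∀ t ∈ Icc 0 T, HasMatDerivWithinAt L (L' t) (Icc 0 T) t)
    (hL' : HasMatDerivWithinAt L' L'' (Icc 0 T) 0)
    (hRic : ∀ t ∈ Ioc (0 : ℝ) T, L' t = t⁻¹ • (L t - L t * L t) - t • B t) :
    ∀ᶠ t in 𝓝[>] 0, ∀ x ∈ nullSphere n, 0 < mink (L t *ᵥ x) x := by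
  have h := (riccati_tendsto_inv_sq_smul hT hB hL0 hL hL' hRic).eventually_forall_nullSphere_pos
    fun x hx => by
      rw [smul_mulVec, mink_smul_left]
      nlinarith [hB0 x (ne_zero_of_mem_nullSphere hx) hx.1]
  filter_upwards [h, self_mem_nhdsWithin] with t ht (htpos : 0 < t) x hx
  have hx' := ht x hx
  rw [smul_mulVec, mink_smul_left, sub_mulVec, one_mulVec, mink_sub_left, hx.1, sub_zero] at hx'
  exact pos_of_mul_pos_right hx' (by positivity)

end Riccati

theorem stmt_3_general {n : ℕ} (T : ℝ) (hT : 0 < T)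
    (B L : ℝ → Matrix (Fin n) (Fin n) ℝ)
    (hBcont : ∀ i j, ContinuousOn (fun t => B t i j) (Set.Icc 0 T))
    (hBdef : ∀ t ∈ Set.Icc (0 : ℝ) T, NullNegDef (B t))
    (hLsmooth : ∀ i j, ContDiffOn ℝ 3 (fun t => L t i j) (Set.Icc 0 T))
    (hLsymm : ∀ t ∈ Set.Icc (0 : ℝ) T, MinkSymm (L t))
    (hL0 : L 0 = 1)
    (hRic : ∀ t ∈ Set.Ioc (0 : ℝ) T,
      t • matDerivWithin L (Set.Icc 0 T) t + L t * L t - L t + t ^ 2 • B t = 0) :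
    ∀ t ∈ Set.Ioc (0 : ℝ) T, ∀ v : Fin n → ℝ, v ≠ 0 → IsNull v →
      0 < mink ((L t).mulVec v) v := by
  have h0 : (0 : ℝ) ∈ Icc 0 T := ⟨le_rfl, hT.le⟩
  set L' := matDerivWithin L (Icc 0 T)
  have hL' : ∀ t ∈ Icc 0 T, HasMatDerivWithinAt L (L' t) (Icc 0 T) t := fun t ht =>
    hasMatDerivWithinAt_matDerivWithin
      (fun i j => (hLsmooth i j).differentiableOn (by norm_num)) ht
  have hL'' : HasMatDerivWithinAt L' (matDerivWithin L' (Icc 0 T) 0) (Icc 0 T) 0 :=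
    hasMatDerivWithinAt_matDerivWithin (fun i j =>
      ((hLsmooth i j).derivWithin (uniqueDiffOn_Icc hT) (m := 1) (by norm_num)).differentiableOn
        one_ne_zero) h0
  have hB : ContinuousWithinAt B (Icc 0 T) 0 :=
    continuousWithinAt_pi.2 fun i => continuousWithinAt_pi.2 fun j => hBcont i j 0 h0
  have hRic' : ∀ t ∈ Ioc (0 : ℝ) T, L' t = t⁻¹ • (L t - L t * L t) - t • B t :=
    fun t ht => riccati_eq_inv_smul ht.1.ne' (hRic t ht)
  suffices h : ∀ t ∈ Ioc 0 T, ∀ x ∈ nullSphere n, 0 < mink (L t *ᵥ x) x from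
    fun t ht v hv0 hv => mink_mulVec_pos_of_nullSphere (h t ht) hv0 hv
  by_contra! hbad
  obtain ⟨t₀, ht₀, v₀, hv₀, hzero, hnonneg, hbefore⟩ := exists_first_zero isCompact_nullSphere
    (continuousOn_mink_mulVec_self fun i j => (hLsmooth i j).continuousOn)
    (riccati_eventually_pos_on_nullSphere hT hB (hBdef 0 h0) hL0 hL' hL'' hRic') hbad
  have ht₀' : t₀ ∈ Icc 0 T := Ioc_subset_Icc_self ht₀
  have hderiv_pos := mink_mulVec_pos_of_riccati ht₀.1 (hRic' t₀ ht₀) (hLsymm t₀ ht₀')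
    (hBdef t₀ ht₀') (fun x hx => mink_mulVec_nonneg_of_nullSphere hnonneg hx)
    (ne_zero_of_mem_nullSphere hv₀) hv₀.1 hzero
  have hderiv_nonpos := nonpos_of_hasDerivWithinAt_of_nonneg_left ht₀.1
    (((hL' t₀ ht₀').mink_mulVec v₀ v₀).mono fun t ht => ⟨ht.1.le, ht.2.le.trans ht₀.2⟩) hzero
    fun t ht => (hbefore t ht v₀ hv₀).le
  exact hderiv_pos.not_ge hderiv_nonpos

/-- Riccati comparison: if `B(t)` is null negative-definite on `[0,T]`
and the Minkowski-symmetric family `L` solves `t L' + L² - L + t² B = 0` on `(0,T]` with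
`L(0) = id`, then `⟨L(t)v,v⟩ > 0` for all `t ∈ (0,T]` and all nonzero null `v`. -/
theorem stmt_3 {n : ℕ} (hn : 2 ≤ n) (T : ℝ) (hT : 0 < T)
    (B L : ℝ → Matrix (Fin n) (Fin n) ℝ)
    (hBcont : ∀ i j, ContinuousOn (fun t => B t i j) (Set.Icc 0 T))
    (hBdef : ∀ t ∈ Set.Icc (0 : ℝ) T, NullNegDef (B t))
    (hLsmooth : ∀ i j, ContDiffOn ℝ 3 (fun t => L t i j) (Set.Icc 0 T))
    (hLsymm : ∀ t ∈ Set.Icc (0 : ℝ) T, MinkSymm (L t))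
    (hL0 : L 0 = 1)
    (hRic : ∀ t ∈ Set.Ioc (0 : ℝ) T,
      t • matDerivWithin L (Set.Icc 0 T) t + L t * L t - L t + t ^ 2 • B t = 0) :
    ∀ t ∈ Set.Ioc (0 : ℝ) T, ∀ v : Fin n → ℝ, v ≠ 0 → IsNull v →
      0 < mink ((L t).mulVec v) v :=
  stmt_3_general T hT B L hBcont hBdef hLsmooth hLsymm hL0 hRic
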